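/- arXiv:2602.12130 — 2 statements merged into one kernel-verified Lean document; each statement's English description precedes it below -/
import Mathlib

section
/- Let σ be an inversion sequence of length n and i ∈ {1,...,n}. The sequence σ' obtained by deleting the entry σ_i from σ is an inversion sequence if and only if Sat(σ) ⊆ {1,...,i}, i.e., every saturated position of σ is at most i. -/
/-- `σ` is an inversion sequence: `σ_i ∈ {0,…,i-1}` (0-indexed: `σ[i] ≤ i`). -/
def IsInvSeq (σ : List ℕ) : Prop := ∀ i < σ.length, σ.getD i 0 ≤ i

/-- `σ` is a Cayley permutation: its value set is `{0,…,max σ}` (downward closed). -/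
def IsCayley (σ : List ℕ) : Prop := ∀ v w : ℕ, w ∈ σ → v ≤ w → v ∈ σ

/-- Maximum diagonal difference `max_i (σ_i - i + 1)` (0-indexed: `max_i (σ[i] - i)`). -/
def mdd (σ : List ℕ) : ℤ :=
  ((List.range σ.length).map (fun i => (σ.getD i 0 : ℤ) - i)).foldr max (-(σ.length : ℤ))

/-- `τ` and `σ` are order-isomorphic sequences of the same length. -/
def OrdIso (τ σ : List ℕ) : Prop :=
  τ.length = σ.length ∧ ∀ i j : ℕ, i < τ.length → j < τ.length →
    (τ.getD i 0 ≤ τ.getD j 0 ↔ σ.getD i 0 ≤ σ.getD j 0)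

/-- `σ` contains the pattern `ρ` (i.e. `ρ ⪯ σ`): some subsequence of `σ` is
order-isomorphic to `ρ`. -/
def ContainsPat (σ ρ : List ℕ) : Prop := ∃ τ : List ℕ, τ.Sublist σ ∧ OrdIso ρ τ

/-- The reduction of `σ`: the `j`-th smallest distinct value is replaced by `j-1`. -/
def red (σ : List ℕ) : List ℕ :=
  σ.map (fun v => (σ.toFinset.filter (fun w => w < v)).card)

/-- Number of distinct values of `σ`. -/
def distv (σ : List ℕ) : ℕ := σ.toFinset.card

/-- Positions (0-indexed) of saturated entries of `σ`. -/
def Sat (σ : List ℕ) : Set ℕ := {i | i < σ.length ∧ (σ.getD i 0 : ℤ) - i = mdd σ}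

/-- `σ` is a ρ-minimal inversion sequence: a minimal element, under pattern
containment, of the set of inversion sequences that are Cayley permutations and
contain `ρ`. -/
def IsMinimalFor (ρ σ : List ℕ) : Prop :=
  IsInvSeq σ ∧ IsCayley σ ∧ ContainsPat σ ρ ∧
  ∀ τ : List ℕ, IsInvSeq τ → IsCayley τ → ContainsPat τ ρ → ContainsPat σ τ → τ = σ

/-! For an inversion sequence every term `σ_j - j + 1` of `mdd σ` is `≤ 0` and the first is `≥ 0`,
so `mdd σ = 0` and the saturated positions are the `j` with `σ_j = j - 1`. Deleting `σ_i` moves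
each later `σ_j` to position `j - 1`, where the bound `σ_j ≤ j - 2` fails exactly when `j` is
saturated. -/

theorem List.foldr_max_le {α : Type*} [LinearOrder α] {l : List α} {b c : α} (hb : b ≤ c)
    (h : ∀ x ∈ l, x ≤ c) : l.foldr max b ≤ c := by
  induction l with
  | nil => exact hb
  | cons y l ih => exact max_le (h y List.mem_cons_self) (ih fun x hx => h x (.tail y hx))

namespace IsInvSeq

variable {σ : List ℕ}

theorem mdd_eq_zero (hσ : IsInvSeq σ) (hne : σ ≠ []) : mdd σ = 0 := by
  have hpos : 0 < σ.length := List.length_pos_iff.2 hne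
  apply le_antisymm
  · refine List.foldr_max_le (by simp) fun x hx => ?_
    obtain ⟨j, hj, rfl⟩ := List.mem_map.1 hx
    have := hσ j (List.mem_range.1 hj)
    omega
  · exact List.le_max_of_le' _ (List.mem_map_of_mem (List.mem_range.2 hpos)) (by simp)

theorem mem_sat_iff (hσ : IsInvSeq σ) (hne : σ ≠ []) {j : ℕ} :
    j ∈ Sat σ ↔ j < σ.length ∧ σ.getD j 0 = j := by
  simp only [Sat, Set.mem_ofPred_eq, hσ.mdd_eq_zero hne, sub_eq_zero, Nat.cast_inj]

theorem eraseIdx_iff {i : ℕ} (hσ : IsInvSeq σ) (hi : i < σ.length) :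
    IsInvSeq (σ.eraseIdx i) ↔ ∀ j, i < j → j < σ.length → σ.getD j 0 ≠ j := by
  simp only [IsInvSeq, List.length_eraseIdx_of_lt hi, List.getD_eq_getElem?_getD] at hσ ⊢
  constructor
  · intro h j hij hj hfix
    have := h (j - 1) (by omega)
    rw [List.getElem?_eraseIdx_of_ge (by omega), Nat.sub_add_cancel (by omega)] at this
    omega
  · intro h j hj
    rcases lt_or_ge j i with hji | hij
    · rw [List.getElem?_eraseIdx_of_lt hji]
      exact hσ j (by omega)
    · rw [List.getElem?_eraseIdx_of_ge hij]
      have := hσ (j + 1) (by omega)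
      have := h (j + 1) (by omega) (by omega)
      omega

end IsInvSeq

theorem stmt7 (σ : List ℕ) (hσ : IsInvSeq σ) (i : ℕ) (hi : i < σ.length) :
    IsInvSeq (σ.eraseIdx i) ↔ ∀ j ∈ Sat σ, j ≤ i := by
  have hne : σ ≠ [] := List.ne_nil_of_length_pos (by omega)
  simp only [hσ.eraseIdx_iff hi, hσ.mem_sat_iff hne]
  constructor
  · rintro h j ⟨hj, hfix⟩
    by_contra! hij
    exact h j hij hj hfix
  · rintro h j hij hj hfix
    exact (h j ⟨hj, hfix⟩).not_gt hij
end

section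
/- An inversion sequence σ contains a nonempty Cayley permutation ρ as a pattern if and only if σ contains some ρ-minimal inversion sequence as a pattern. -/
def OrderCompatible (Z : List (ℕ × ℕ)) : Prop := ∀ p ∈ Z, ∀ q ∈ Z, (p.1 ≤ q.1 ↔ p.2 ≤ q.2)

lemma OrdIso.symm {a b : List ℕ} (h : OrdIso a b) : OrdIso b a :=
  ⟨h.1.symm, fun i j hi hj => (h.2 i j (h.1 ▸ hi) (h.1 ▸ hj)).symm⟩

lemma OrdIso.trans {a b c : List ℕ} (h₁ : OrdIso a b) (h₂ : OrdIso b c) : OrdIso a c :=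
  ⟨h₁.1.trans h₂.1, fun i j hi hj => (h₁.2 i j hi hj).trans (h₂.2 i j (h₁.1 ▸ hi) (h₁.1 ▸ hj))⟩

lemma OrdIso.orderCompatible_zip {a b : List ℕ} (h : OrdIso a b) : OrderCompatible (a.zip b) := by
  intro p hp q hq
  obtain ⟨i, hi, rfl⟩ := List.mem_iff_getElem.1 hp
  obtain ⟨j, hj, rfl⟩ := List.mem_iff_getElem.1 hq
  simp only [List.length_zip, lt_min_iff] at hi hj
  simpa only [List.getElem_zip, List.getD_eq_getElem _ _ hi.1, List.getD_eq_getElem _ _ hi.2,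
    List.getD_eq_getElem _ _ hj.1, List.getD_eq_getElem _ _ hj.2] using h.2 i j hi.1 hj.1

lemma OrderCompatible.ordIso {Z : List (ℕ × ℕ)} (hZ : OrderCompatible Z) :
    OrdIso (Z.map Prod.fst) (Z.map Prod.snd) := by
  refine ⟨by rw [List.length_map, List.length_map], fun i j hi hj => ?_⟩
  rw [List.length_map] at hi hj
  simp only [List.getD_eq_getElem?_getD, List.getElem?_map, List.getElem?_eq_getElem hi,
    List.getElem?_eq_getElem hj, Option.map_some, Option.getD_some]
  exact hZ _ (List.getElem_mem hi) _ (List.getElem_mem hj)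

lemma OrdIso.exists_sublist {a b τ : List ℕ} (h : OrdIso a b) (hτ : τ.Sublist a) :
    ∃ τ', τ'.Sublist b ∧ OrdIso τ τ' := by
  rw [← List.map_fst_zip h.1.le] at hτ
  obtain ⟨Z, hZ, rfl⟩ := List.sublist_map_iff.1 hτ
  refine ⟨Z.map Prod.snd, List.map_snd_zip h.1.ge ▸ hZ.map _, OrderCompatible.ordIso ?_⟩
  exact fun p hp q hq => h.orderCompatible_zip p (hZ.subset hp) q (hZ.subset hq)

lemma ContainsPat.of_ordIso {σ ρ : List ℕ} (h : OrdIso σ ρ) : ContainsPat σ ρ :=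
  ⟨σ, List.Sublist.refl σ, h.symm⟩

lemma ContainsPat.trans {σ μ ρ : List ℕ} (h₁ : ContainsPat σ μ) (h₂ : ContainsPat μ ρ) :
    ContainsPat σ ρ := by
  obtain ⟨τ₁, hτ₁, hμτ₁⟩ := h₁
  obtain ⟨τ₂, hτ₂, hρτ₂⟩ := h₂
  obtain ⟨τ₃, hτ₃, hτ₂τ₃⟩ := hμτ₁.exists_sublist hτ₂
  exact ⟨τ₃, hτ₃.trans hτ₁, hρτ₂.trans hτ₂τ₃⟩

lemma IsCayley.fst_le_snd {a b : List ℕ} (ha : IsCayley a) (h : OrdIso a b) :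
    ∀ p ∈ a.zip b, p.1 ≤ p.2 := by
  intro p hp
  have hZ := h.orderCompatible_zip
  have hvals : ∀ v, v < p.1 → ∃ q ∈ a.zip b, q.1 = v := by
    intro v hv
    have hva : v ∈ (a.zip b).map Prod.fst := by
      rw [List.map_fst_zip h.1.le]
      exact ha v p.1 (List.of_mem_zip hp).1 hv.le
    simpa using hva
  choose! g hgZ hg using hvals
  have hcard : (Finset.range p.1).card ≤ (Finset.range p.2).card := by
    refine Finset.card_le_card_of_injOn (fun v => (g v).2) (fun v hv => ?_) (fun v hv w hw hvw => ?_)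
    · simp only [Finset.coe_range, Set.mem_Iio] at hv ⊢
      have := (hZ p hp (g v) (hgZ v hv)).not
      rw [hg v hv] at this
      omega
    · simp only [Finset.coe_range, Set.mem_Iio] at hv hw
      have hle := (hZ _ (hgZ v hv) _ (hgZ w hw)).2 hvw.le
      have hge := (hZ _ (hgZ w hw) _ (hgZ v hv)).2 hvw.ge
      rw [hg v hv, hg w hw] at hle hge
      omega
  simpa using hcard

lemma IsCayley.eq_of_ordIso {a b : List ℕ} (ha : IsCayley a) (hb : IsCayley b) (h : OrdIso a b) :
    a = b := by
  have hfst_eq_snd : ∀ p ∈ a.zip b, p.1 = p.2 := fun p hp =>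
    le_antisymm (ha.fst_le_snd h p hp)
      (hb.fst_le_snd h.symm p.swap (List.zip_swap a b ▸ List.mem_map_of_mem hp))
  calc a = (a.zip b).map Prod.fst := (List.map_fst_zip h.1.le).symm
    _ = (a.zip b).map Prod.snd := List.map_congr_left hfst_eq_snd
    _ = b := List.map_snd_zip h.1.ge

def rank (s : Finset ℕ) (v : ℕ) : ℕ := (s.filter (· < v)).card

lemma rank_mono (s : Finset ℕ) : Monotone (rank s) := fun _ _ hxy =>
  Finset.card_le_card (Finset.monotone_filter_right s (fun _ _ hw => hw.trans_le hxy))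

lemma rank_lt_rank {s : Finset ℕ} {x y : ℕ} (hy : y ∈ s) (hxy : y < x) : rank s y < rank s x := by
  refine Finset.card_lt_card ⟨Finset.monotone_filter_right s (fun _ _ hw => hw.trans hxy), fun hsub => ?_⟩
  simpa using hsub (Finset.mem_filter.2 ⟨hy, hxy⟩)

lemma rank_le_rank_iff {s : Finset ℕ} {x y : ℕ} (hy : y ∈ s) : rank s x ≤ rank s y ↔ x ≤ y :=
  ⟨fun h => not_lt.1 fun hyx => (rank_lt_rank hy hyx).not_ge h, fun h => rank_mono s h⟩

lemma rank_le_self (s : Finset ℕ) (v : ℕ) : rank s v ≤ v := by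
  unfold rank
  simpa using Finset.card_le_card (fun w hw => Finset.mem_range.2 (Finset.mem_filter.1 hw).2 :
    s.filter (· < v) ⊆ Finset.range v)

lemma rank_lt_card {s : Finset ℕ} {v : ℕ} (hv : v ∈ s) : rank s v < s.card :=
  Finset.card_lt_card ⟨Finset.filter_subset _ s, fun hsub => by simpa using hsub hv⟩

lemma image_rank (s : Finset ℕ) : s.image (rank s) = Finset.range s.card := by
  refine Finset.eq_of_subset_of_card_le ?_ ?_
  · simpa [Finset.subset_iff] using fun v hv => rank_lt_card hv
  · rw [Finset.card_range, Finset.card_image_of_injOn fun x hx y hy hxy =>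
      le_antisymm ((rank_le_rank_iff hy).1 hxy.le) ((rank_le_rank_iff hx).1 hxy.ge)]

lemma red_eq_map_rank (σ : List ℕ) : red σ = σ.map (rank σ.toFinset) := rfl

lemma ordIso_red (σ : List ℕ) : OrdIso (red σ) σ := by
  have hZ : OrderCompatible (σ.map fun v => (rank σ.toFinset v, v)) := by
    simp only [OrderCompatible, List.mem_map]
    rintro _ ⟨v, -, rfl⟩ _ ⟨w, hw, rfl⟩
    exact rank_le_rank_iff (List.mem_toFinset.2 hw)
  simpa [red_eq_map_rank, Function.comp_def] using hZ.ordIso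

lemma IsInvSeq.red {σ : List ℕ} (hσ : IsInvSeq σ) : IsInvSeq (red σ) := by
  intro i hi
  rw [(ordIso_red σ).1] at hi
  rw [red_eq_map_rank, List.getD_eq_getElem _ _ (by simpa using hi), List.getElem_map,
    ← List.getD_eq_getElem _ 0 hi]
  exact (rank_le_self _ _).trans (hσ i hi)

lemma isCayley_red (σ : List ℕ) : IsCayley (red σ) := by
  intro v w hw hvw
  have hmem : ∀ u, u ∈ red σ ↔ u < σ.toFinset.card := by
    intro u
    have : u ∈ red σ ↔ u ∈ σ.toFinset.image (rank σ.toFinset) := by simp [red_eq_map_rank]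
    rw [this, image_rank, Finset.mem_range]
  exact (hmem v).2 (lt_of_le_of_lt hvw ((hmem w).1 hw))

lemma eq_of_containsPat_of_length_le {τ τ' : List ℕ} (hτ : IsCayley τ) (hτ' : IsCayley τ')
    (h : ContainsPat τ τ') (hlen : τ.length ≤ τ'.length) : τ' = τ := by
  obtain ⟨μ, hμ, hτ'μ⟩ := h
  rw [hμ.eq_of_length (by have := hμ.length_le; have := hτ'μ.1; omega)] at hτ'μ
  exact hτ'.eq_of_ordIso hτ hτ'μ

theorem stmt10_general (σ ρ : List ℕ) (hσ : IsInvSeq σ) :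
    ContainsPat σ ρ ↔ ∃ τ : List ℕ, IsMinimalFor ρ τ ∧ ContainsPat σ τ := by
  refine ⟨fun hσρ => ?_, fun ⟨τ, hτ, hστ⟩ => hστ.trans hτ.2.2.1⟩
  set S := {τ | IsInvSeq τ ∧ IsCayley τ ∧ ContainsPat τ ρ ∧ ContainsPat σ τ}
  have hred : red σ ∈ S := ⟨hσ.red, isCayley_red σ,
    (ContainsPat.of_ordIso (ordIso_red σ)).trans hσρ, .of_ordIso (ordIso_red σ).symm⟩
  obtain ⟨τ, ⟨hτinv, hτC, hτρ, hστ⟩, hτmin⟩ := (measure List.length).wf.has_min S ⟨_, hred⟩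
  refine ⟨τ, ⟨hτinv, hτC, hτρ, fun τ' hτ'inv hτ'C hτ'ρ hττ' => ?_⟩, hστ⟩
  exact eq_of_containsPat_of_length_le hτC hτ'C hττ'
    (not_lt.1 (hτmin τ' ⟨hτ'inv, hτ'C, hτ'ρ, hστ.trans hττ'⟩))

theorem stmt10 (σ ρ : List ℕ) (hσ : IsInvSeq σ) (hρ : ρ ≠ []) (hC : IsCayley ρ) :
    ContainsPat σ ρ ↔ ∃ τ : List ℕ, IsMinimalFor ρ τ ∧ ContainsPat σ τ :=
  stmt10_general σ ρ hσ
end
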